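/- Let S be a symplectic Hilbert space and I₂ ⊆ I₁ two closed cofinite isotropic subspaces (cofinite meaning the symplectic reductions S_{I_i} = I_i^♯ ∩ I_i^⊥ are finite-dimensional). Let I = I₁ ∩ I₂^⊥. Then I is an isotropic subspace of the symplectic space S_{I₂}, and the iterated reduction satisfies (S_{I₂})_I = S_{I₁}. -/

import Mathlib

/-!
Since `I₂` is closed in the Hilbert space `S` and `I₂ ≤ I₁`, orthogonal projection onto `I₂`
splits `I₁ = I₂ ⊔ I` with `I = I₁ ⊓ I₂ᗮ`. Both the symplectic annihilator (it is the
orthogonal complement of the image under `J`) and the orthogonal complement turn sups into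
infs, so the reduction of `S_{I₂}` by `I` cuts out exactly `I₁^♯ ⊓ I₁ᗮ = S_{I₁}`. Isotropy of
`I` in `S_{I₂}` is inherited from the isotropy of `I₁`, which contains both `I` and `I₂`.
-/

open RealInnerProductSpace

variable {S : Type*} [NormedAddCommGroup S] [InnerProductSpace ℝ S] [CompleteSpace S]

/-- The symplectic annihilator of `W` with respect to the symplectic form
`ω u v = ⟪J u, v⟫`. -/
def sympAnn (J : S →ₗ[ℝ] S) (W : Submodule ℝ S) : Submodule ℝ S where
  carrier := {v : S | ∀ u ∈ W, ⟪J u, v⟫ = 0}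
  zero_mem' := by intro u _; simp
  add_mem' := by
    intro a b ha hb u hu
    rw [inner_add_right, ha u hu, hb u hu, add_zero]
  smul_mem' := by
    intro c a ha u hu
    rw [real_inner_smul_right, ha u hu, mul_zero]

section SympAnn

variable {E : Type*} [NormedAddCommGroup E] [InnerProductSpace ℝ E] (J : E →ₗ[ℝ] E)

theorem sympAnn_eq_orthogonal_map (W : Submodule ℝ E) : sympAnn J W = (W.map J)ᗮ := by
  ext v
  constructor
  · rintro hv _ ⟨u, hu, rfl⟩
    exact hv u hu
  · exact fun hv u hu => hv (J u) ⟨u, hu, rfl⟩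

theorem sympAnn_anti {W W' : Submodule ℝ E} (h : W ≤ W') : sympAnn J W' ≤ sympAnn J W :=
  fun _ hv u hu => hv u (h hu)

theorem sympAnn_sup (K L : Submodule ℝ E) :
    sympAnn J (K ⊔ L) = sympAnn J K ⊓ sympAnn J L := by
  simp only [sympAnn_eq_orthogonal_map, Submodule.map_sup, Submodule.inf_orthogonal]

theorem le_sympAnn_of_isotropic {I W K : Submodule ℝ E} (hI : I ≤ sympAnn J I)
    (hW : W ≤ I) (hK : K ≤ I) : W ≤ sympAnn J K :=
  (hW.trans hI).trans (sympAnn_anti J hK)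

theorem sympAnn_inf_orthogonal_sup (K L : Submodule ℝ E) :
    sympAnn J (K ⊔ L) ⊓ (K ⊔ L)ᗮ = sympAnn J K ⊓ Kᗮ ⊓ sympAnn J L ⊓ Lᗮ := by
  rw [sympAnn_sup, ← Submodule.inf_orthogonal]
  ac_rfl

end SympAnn

theorem statement15_general
    (J : S →ₗ[ℝ] S)
    (I₁ I₂ : Submodule ℝ S)
    (hI₂c : IsClosed (I₂ : Set S))
    (hsub : I₂ ≤ I₁)
    (hI₁iso : I₁ ≤ sympAnn J I₁) :
    I₁ ⊓ I₂ᗮ ≤ sympAnn J I₂ ⊓ I₂ᗮ ∧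
    I₁ ⊓ I₂ᗮ ≤ sympAnn J (I₁ ⊓ I₂ᗮ) ∧
    (sympAnn J I₂ ⊓ I₂ᗮ) ⊓ sympAnn J (I₁ ⊓ I₂ᗮ) ⊓ (I₁ ⊓ I₂ᗮ)ᗮ =
      sympAnn J I₁ ⊓ I₁ᗮ := by
  have : CompleteSpace I₂ := hI₂c.completeSpace_coe
  have hdecomp : I₂ ⊔ I₁ ⊓ I₂ᗮ = I₁ := by
    rw [inf_comm]
    exact Submodule.sup_orthogonal_inf_of_hasOrthogonalProjection hsub
  refine ⟨le_inf (le_sympAnn_of_isotropic J hI₁iso inf_le_left hsub) inf_le_right,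
    le_sympAnn_of_isotropic J hI₁iso inf_le_left inf_le_left, ?_⟩
  rw [← sympAnn_inf_orthogonal_sup, hdecomp]

/-- Iterated symplectic reduction: if `I₂ ⊆ I₁` are closed cofinite isotropic
subspaces and `I = I₁ ∩ I₂^⊥`, then `I` is an isotropic subspace of the
reduction `S_{I₂}` and `(S_{I₂})_I = S_{I₁}`. -/
theorem statement15
    (J : S →ₗ[ℝ] S)
    (hiso : ∀ u v : S, ⟪J u, J v⟫ = ⟪u, v⟫)
    (hJ2 : ∀ u : S, J (J u) = -u)
    (I₁ I₂ : Submodule ℝ S)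
    (hI₁c : IsClosed (I₁ : Set S)) (hI₂c : IsClosed (I₂ : Set S))
    (hsub : I₂ ≤ I₁)
    (hI₁iso : I₁ ≤ sympAnn J I₁) (hI₂iso : I₂ ≤ sympAnn J I₂)
    (hcof₁ : FiniteDimensional ℝ ↥(sympAnn J I₁ ⊓ I₁ᗮ))
    (hcof₂ : FiniteDimensional ℝ ↥(sympAnn J I₂ ⊓ I₂ᗮ)) :
    I₁ ⊓ I₂ᗮ ≤ sympAnn J I₂ ⊓ I₂ᗮ ∧
    I₁ ⊓ I₂ᗮ ≤ sympAnn J (I₁ ⊓ I₂ᗮ) ∧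
    (sympAnn J I₂ ⊓ I₂ᗮ) ⊓ sympAnn J (I₁ ⊓ I₂ᗮ) ⊓ (I₁ ⊓ I₂ᗮ)ᗮ =
      sympAnn J I₁ ⊓ I₁ᗮ :=
  statement15_general J I₁ I₂ hI₂c hsub hI₁iso
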